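/- Let X be a metric space and φ : ℝ → X → X a continuous flow. Let C ⊆ X be a compact set, K⁻ := {x | ∀ t ≥ 0, φ t x ∈ C}, K⁺ := {x | ∀ t ≤ 0, φ t x ∈ C}, and K := K⁻ ∩ K⁺. If x ∈ K⁻, then dist(φ t x, K) → 0 as t → +∞. -/

import Mathlib

/-!
Since the forward orbit of `x` stays in the compact set `C`, it eventually enters every
neighbourhood of its set of ω-limit points, so it suffices to show that each ω-limit point `y`
lies in `K`. Each `φ s y` is then a cluster point of the orbit
`t ↦ φ (s + t) x`, which lies in `C` for large `t`; as `C` is closed, the whole orbit of `y` stays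
in `C`.
-/

open Filter Topology Metric

theorem Metric.tendsto_infDist_zero_of_tendsto_nhdsSet {α X : Type*} [PseudoMetricSpace X]
    {f : α → X} {l : Filter α} {K : Set X} (h : Tendsto f l (𝓝ˢ K)) :
    Tendsto (fun a => infDist (f a) K) l (𝓝 0) := by
  rcases K.eq_empty_or_nonempty with rfl | hK
  · simpa only [infDist_empty] using tendsto_const_nhds
  refine tendsto_order.2 ⟨fun ε hε => .of_forall fun a => hε.trans_le infDist_nonneg,
    fun ε hε => ?_⟩
  filter_upwards [h (thickening_mem_nhdsSet K hε)] with a ha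
  exact (mem_thickening_iff_infDist_lt hK).1 ha

theorem MapClusterPt.flow_mem_of_eventually_flow_mem {τ X : Type*} [AddCommGroup τ]
    [PartialOrder τ] [IsOrderedAddMonoid τ] [TopologicalSpace X] {φ : τ → X → X}
    (hφ : ∀ s, Continuous (φ s)) (hadd : ∀ s t x, φ (s + t) x = φ s (φ t x))
    {C : Set X} (hC : IsClosed C) {x y : X} (hx : ∀ᶠ t in atTop, φ t x ∈ C)
    (hy : MapClusterPt y atTop fun t => φ t x) (s : τ) : φ s y ∈ C := by
  refine hC.mem_of_mapClusterPt (hy.continuousAt_comp (hφ s).continuousAt) ?_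
  filter_upwards [(tendsto_atTop_add_const_left atTop s tendsto_id).eventually hx] with t ht
  rwa [Function.comp_apply, ← hadd]

theorem forward_trapped_converges_to_trapped_set_general
    {X : Type*} [MetricSpace X] (φ : ℝ → X → X)
    (hcont : Continuous fun p : ℝ × X => φ p.1 p.2)
    (hadd : ∀ s t : ℝ, ∀ x : X, φ (s + t) x = φ s (φ t x))
    (C : Set X) (hC : IsCompact C)
    (Kminus Kplus K : Set X)
    (hKminus : Kminus = {x : X | ∀ t : ℝ, 0 ≤ t → φ t x ∈ C})
    (hKplus : Kplus = {x : X | ∀ t : ℝ, t ≤ 0 → φ t x ∈ C})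
    (hK : K = Kminus ∩ Kplus)
    (x : X) (hx : x ∈ Kminus) :
    Filter.Tendsto (fun t : ℝ => Metric.infDist (φ t x) K)
      Filter.atTop (nhds 0) := by
  subst hKminus hKplus hK
  have hφ : ∀ s, Continuous (φ s) := fun s => hcont.comp (Continuous.prodMk_right s)
  have hx_eventually : ∀ᶠ t in atTop, φ t x ∈ C := (eventually_ge_atTop 0).mono hx
  have hflow_mem : ∀ y, MapClusterPt y atTop (fun t => φ t x) → ∀ s, φ s y ∈ C :=
    fun y hy => hy.flow_mem_of_eventually_flow_mem hφ hadd hC.isClosed hx_eventually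
  refine tendsto_infDist_zero_of_tendsto_nhdsSet <|
    hC.tendsto_nhdsSet_of_mapClusterPt hx_eventually fun y _ hy => ?_
  exact ⟨fun s _ => hflow_mem y hy s, fun s _ => hflow_mem y hy s⟩

/-- A forward-trapped point of a continuous flow converges to the trapped set
`K = K⁻ ∩ K⁺`: `dist(φ t x, K) → 0` as `t → +∞`. -/
theorem forward_trapped_converges_to_trapped_set
    {X : Type*} [MetricSpace X] (φ : ℝ → X → X)
    (hcont : Continuous fun p : ℝ × X => φ p.1 p.2)
    (h0 : ∀ x, φ 0 x = x)
    (hadd : ∀ s t : ℝ, ∀ x : X, φ (s + t) x = φ s (φ t x))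
    (C : Set X) (hC : IsCompact C)
    (Kminus Kplus K : Set X)
    (hKminus : Kminus = {x : X | ∀ t : ℝ, 0 ≤ t → φ t x ∈ C})
    (hKplus : Kplus = {x : X | ∀ t : ℝ, t ≤ 0 → φ t x ∈ C})
    (hK : K = Kminus ∩ Kplus)
    (x : X) (hx : x ∈ Kminus) :
    Filter.Tendsto (fun t : ℝ => Metric.infDist (φ t x) K)
      Filter.atTop (nhds 0) :=
  forward_trapped_converges_to_trapped_set_general φ hcont hadd C hC Kminus Kplus K hKminus hKplus
    hK x hx
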